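/- The monoid S presented by ⟨a, b | a*b*a*b = 1, b*a*b*a = 1⟩ is an LEF semigroup. -/

import Mathlib

/-!
The relations make `a` and `b` units (`a⁻¹ = bab`, `b⁻¹ = aba`) and `ab` an involution, so `S` is
the free product `ℤ ∗ ℤ/2` generated by `b` and `ab`. Sending `b` to `!![1, 2; 0, 1]` and `ab` to
`!![0, 1; 1, 0]` is faithful by ping-pong on the regions `|x| < |y|` and `|y| < |x|` of `ℤ²`. Reducing
the entries of an integer matrix modulo a large enough `m` is then injective on any given finite
set and multiplicative, which is exactly what LEF asks for.
-/

namespace Stmt4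

/-- A semigroup `S` is LEF if for every finite subset `H` of `S` there exist a finite
semigroup `F` and a function `f : S → F` injective on `H` such that
`f (x * y) = f x * f y` whenever `x, y, x * y ∈ H`. -/
def IsLEF (S : Type*) [Semigroup S] : Prop :=
  ∀ H : Finset S, ∃ (F : Type) (_ : Semigroup F) (_ : Fintype F) (f : S → F),
    Set.InjOn f ↑H ∧
      ∀ x ∈ H, ∀ y ∈ H, x * y ∈ H → f (x * y) = f x * f y

/-- The generator `a` of the free monoid on two generators. -/
def a : FreeMonoid (Fin 2) := FreeMonoid.of 0

/-- The generator `b` of the free monoid on two generators. -/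
def b : FreeMonoid (Fin 2) := FreeMonoid.of 1

/-- The defining relations `a * b * a * b = 1` and `b * a * b * a = 1`. -/
def rel : FreeMonoid (Fin 2) → FreeMonoid (Fin 2) → Prop :=
  fun x y => (x = a * b * a * b ∧ y = 1) ∨ (x = b * a * b * a ∧ y = 1)

/-- The monoid `S = ⟨a, b ∣ abab = 1, baba = 1⟩`. -/
def S : Type := (conGen rel).Quotient

instance : Monoid S := Con.monoid _

theorem exists_injOn_intCast_zmod (s : Finset ℤ) :
    ∃ m : ℕ, NeZero m ∧ Set.InjOn (Int.cast : ℤ → ZMod m) s := by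
  set N := s.sup Int.natAbs
  refine ⟨2 * N + 1, ⟨by omega⟩, fun x hx y hy hxy => ?_⟩
  have hxN : x.natAbs ≤ N := Finset.le_sup (f := Int.natAbs) hx
  have hyN : y.natAbs ≤ N := Finset.le_sup (f := Int.natAbs) hy
  have hdvd := (ZMod.intCast_eq_intCast_iff_dvd_sub x y _).1 hxy
  have hlt : |y - x| < ((2 * N + 1 : ℕ) : ℤ) := by rw [abs_lt]; omega
  linarith [Int.eq_zero_of_abs_lt_dvd hdvd hlt]

theorem exists_injOn_matrix_map_intCast_zmod {n : Type*} [Fintype n]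
    (H : Finset (Matrix n n ℤ)) :
    ∃ m : ℕ, NeZero m ∧ Set.InjOn (fun M : Matrix n n ℤ => M.map (Int.cast : ℤ → ZMod m)) H := by
  classical
  obtain ⟨m, hm, hinj⟩ :=
    exists_injOn_intCast_zmod (H.biUnion fun M => Finset.univ.image fun ij : n × n => M ij.1 ij.2)
  refine ⟨m, hm, fun M hM N hN hMN => Matrix.ext fun i j => hinj ?_ ?_ (congrFun₂ hMN i j)⟩ <;>
    exact Finset.mem_biUnion.2 ⟨_, ‹_›, Finset.mem_image_of_mem _ (Finset.mem_univ (i, j))⟩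

theorem isLEF_of_injective_matrix {M : Type*} [Monoid M] {n : Type} [Fintype n] [DecidableEq n]
    {ρ : M →* Matrix n n ℤ} (hρ : Function.Injective ρ) : IsLEF M := by
  intro H
  obtain ⟨m, hm, hinj⟩ := exists_injOn_matrix_map_intCast_zmod (H.image ρ)
  refine ⟨Matrix n n (ZMod m), inferInstance, inferInstance,
    (Int.castRingHom (ZMod m)).mapMatrix.toMonoidHom.comp ρ, ?_, fun x _ y _ _ => map_mul _ x y⟩
  refine hinj.comp hρ.injOn fun x hx => ?_
  simpa using Finset.mem_image_of_mem ρ hx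

def zmodPowersHom {G : Type*} [Group G] (n : ℕ) (g : G) (hg : g ^ n = 1) :
    Multiplicative (ZMod n) →* G :=
  AddMonoidHom.toMultiplicativeLeft <|
    ZMod.lift n ⟨zmultiplesHom (Additive G) (Additive.ofMul g), by simpa [← ofMul_pow] using hg⟩

@[simp]
theorem zmodPowersHom_ofAdd_intCast {G : Type*} [Group G] (n : ℕ) (g : G) (hg : g ^ n = 1)
    (k : ℤ) : zmodPowersHom n g hg (Multiplicative.ofAdd (k : ZMod n)) = g ^ k := by
  simp [zmodPowersHom]

@[simp]
theorem zmodPowersHom_ofAdd_one {G : Type*} [Group G] (n : ℕ) (g : G) (hg : g ^ n = 1) :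
    zmodPowersHom n g hg (Multiplicative.ofAdd 1) = g := by
  simpa using zmodPowersHom_ofAdd_intCast n g hg 1

/-- The free product `ℤ ∗ ℤ/2` (recall `ZMod 0 = ℤ`). -/
abbrev ZFreeZ2 : Type := Monoid.CoprodI fun i : Fin 2 => Multiplicative (ZMod (![0, 2] i))

namespace ZFreeZ2

def gen (i : Fin 2) : ZFreeZ2 := Monoid.CoprodI.of (Multiplicative.ofAdd (1 : ZMod (![0, 2] i)))

def lift {G : Type*} [Group G] (g : Fin 2 → G) (hg : g 1 ^ 2 = 1) : ZFreeZ2 →* G :=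
  Monoid.CoprodI.lift fun i => zmodPowersHom (![0, 2] i) (g i) (by fin_cases i <;> simp [hg])

@[simp]
theorem lift_gen {G : Type*} [Group G] (g : Fin 2 → G) (hg : g 1 ^ 2 = 1) (i : Fin 2) :
    lift g hg (gen i) = g i := by
  simp [lift, gen]

@[simp]
theorem gen_one_mul_self : gen 1 * gen 1 = 1 := by
  rw [gen, ← map_mul, ← ofAdd_add]
  exact map_one _

@[simp]
theorem gen_one_mul_gen_one_mul (x : ZFreeZ2) : gen 1 * (gen 1 * x) = x := by
  rw [← mul_assoc, gen_one_mul_self, one_mul]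

end ZFreeZ2

namespace S

def mk : FreeMonoid (Fin 2) →* S := Con.mk' _

theorem mk_abab : mk (a * b * a * b) = 1 :=
  (Con.eq _).2 (ConGen.Rel.of _ _ (Or.inl ⟨rfl, rfl⟩))

theorem mk_baba : mk (b * a * b * a) = 1 :=
  (Con.eq _).2 (ConGen.Rel.of _ _ (Or.inr ⟨rfl, rfl⟩))

def unitB : Sˣ where
  val := mk b
  inv := mk (a * b * a)
  val_inv := by simpa [mul_assoc] using mk_baba
  inv_val := by simpa [mul_assoc] using mk_abab

def unitAB : Sˣ where
  val := mk (a * b)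
  inv := mk (a * b)
  val_inv := by simpa [mul_assoc] using mk_abab
  inv_val := by simpa [mul_assoc] using mk_abab

def toZFreeZ2 : S →* ZFreeZ2 :=
  Con.lift _ (FreeMonoid.lift ![ZFreeZ2.gen 1 * (ZFreeZ2.gen 0)⁻¹, ZFreeZ2.gen 0]) <|
    Con.conGen_le.2 <| by
      rintro x y (⟨rfl, rfl⟩ | ⟨rfl, rfl⟩) <;>
        simp [a, b, Con.ker_rel, mul_assoc]

def ofZFreeZ2 : ZFreeZ2 →* Sˣ :=
  ZFreeZ2.lift ![unitB, unitAB] <| Units.ext <| by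
    change mk (a * b) * mk (a * b) = 1
    simpa [mul_assoc] using mk_abab

theorem toZFreeZ2_mk (w : FreeMonoid (Fin 2)) :
    toZFreeZ2 (mk w) = FreeMonoid.lift ![ZFreeZ2.gen 1 * (ZFreeZ2.gen 0)⁻¹, ZFreeZ2.gen 0] w :=
  rfl

theorem coe_ofZFreeZ2_toZFreeZ2 (x : S) : (ofZFreeZ2 (toZFreeZ2 x) : S) = x := by
  suffices h : (Units.coeHom S).comp (ofZFreeZ2.comp toZFreeZ2) = MonoidHom.id S from
    DFunLike.congr_fun h x
  refine Con.hom_ext (FreeMonoid.hom_eq fun i => ?_)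
  fin_cases i
  · change ((ofZFreeZ2 (toZFreeZ2 (mk a)) : Sˣ) : S) = mk a
    simp only [toZFreeZ2_mk, a, FreeMonoid.lift_eval_of, Matrix.cons_val_zero, map_mul, map_inv,
      ofZFreeZ2, ZFreeZ2.lift_gen]
    change mk (a * b) * mk (a * b * a) = mk a
    simpa [mul_assoc] using congrArg (mk a * ·) mk_baba
  · change ((ofZFreeZ2 (toZFreeZ2 (mk b)) : Sˣ) : S) = mk b
    simp [toZFreeZ2_mk, b, ofZFreeZ2, unitB]

theorem toZFreeZ2_injective : Function.Injective toZFreeZ2 :=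
  Function.LeftInverse.injective (g := fun y => (ofZFreeZ2 y : S)) coe_ofZFreeZ2_toZFreeZ2

end S

namespace ZFreeZ2

open scoped Pointwise

def transl : GL (Fin 2) ℤ := ⟨!![1, 2; 0, 1], !![1, -2; 0, 1], by decide, by decide⟩

def swap : GL (Fin 2) ℤ := ⟨!![0, 1; 1, 0], !![0, 1; 1, 0], by decide, by decide⟩

theorem transl_smul (v : Fin 2 → ℤ) : transl • v = ![v 0 + 2 * v 1, v 1] := by
  ext i; fin_cases i <;> simp [transl, Units.smul_def, Matrix.mulVec, dotProduct]

theorem transl_zpow_smul (k : ℤ) (v : Fin 2 → ℤ) :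
    (transl ^ k) • v = ![v 0 + 2 * k * v 1, v 1] := by
  induction k using Int.induction_on generalizing v with
  | zero => ext i; fin_cases i <;> simp
  | succ k ih => rw [zpow_add_one, mul_smul, transl_smul, ih]; ext i; fin_cases i <;> simp; ring
  | pred k ih =>
    have h : transl⁻¹ • v = ![v 0 - 2 * v 1, v 1] := by
      rw [inv_smul_eq_iff, transl_smul]; ext i; fin_cases i <;> simp
    rw [zpow_sub_one, mul_smul, h, ih]; ext i; fin_cases i <;> simp; ring

theorem swap_smul (v : Fin 2 → ℤ) : swap • v = ![v 1, v 0] := by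
  ext i; fin_cases i <;> simp [swap, Units.smul_def, Matrix.mulVec, dotProduct]

theorem transl_zpow_smul_subset {k : ℤ} (hk : k ≠ 0) :
    (transl ^ k) • {v : Fin 2 → ℤ | |v 0| < |v 1|} ⊆ {v | |v 1| < |v 0|} := by
  refine Set.smul_set_subset_iff.2 fun v (hv : |v 0| < |v 1|) => ?_
  have hk1 : |v 1| ≤ |k * v 1| := by
    rw [abs_mul]; exact le_mul_of_one_le_left (abs_nonneg _) (Int.one_le_abs hk)
  have htri : |2 * (k * v 1)| ≤ |v 0 + 2 * (k * v 1)| + |v 0| := by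
    simpa using abs_sub (v 0 + 2 * (k * v 1)) (v 0)
  simp only [Set.mem_ofPred_eq, transl_zpow_smul, Matrix.cons_val_zero, Matrix.cons_val_one,
    mul_assoc]
  rw [abs_mul, abs_two] at htri
  linarith

theorem swap_zpow_of_odd {k : ℤ} (hk : Odd k) : swap ^ k = swap := by
  rw [zpow_eq_zpow_emod' k (by decide : swap ^ 2 = 1), Nat.cast_ofNat, Int.odd_iff.1 hk, zpow_one]

theorem swap_smul_subset :
    swap • {v : Fin 2 → ℤ | |v 1| < |v 0|} ⊆ {v | |v 0| < |v 1|} :=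
  Set.smul_set_subset_iff.2 fun v hv => by
    rw [Set.mem_ofPred_eq, swap_smul]; simpa using hv

def toGL : ZFreeZ2 →* GL (Fin 2) ℤ := lift ![transl, swap] (by decide)

theorem toGL_injective : Function.Injective toGL := by
  refine Monoid.CoprodI.lift_injective_of_ping_pong _ (.inr ⟨0, ?_⟩)
    ![{v : Fin 2 → ℤ | |v 1| < |v 0|}, {v | |v 0| < |v 1|}] (fun i => ?_) (fun i j hij => ?_) ?_
  · exact (Cardinal.natCast_lt_aleph0 (n := 3)).le.trans
      (Cardinal.infinite_iff.1 (inferInstanceAs (Infinite (Multiplicative ℤ))))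
  · fin_cases i
    exacts [⟨![1, 0], by simp⟩, ⟨![0, 1], by simp⟩]
  · fin_cases i <;> fin_cases j <;> simp at hij <;>
      exact Set.disjoint_left.2 fun v h₁ h₂ => by simp at h₁ h₂; linarith
  · intro i j hij h hh
    obtain ⟨k, hk⟩ := ZMod.intCast_surjective (Multiplicative.toAdd h)
    have hk0 : (k : ZMod (![0, 2] i)) ≠ 0 := fun h0 => hh <| by
      rw [← ofAdd_toAdd h, ← hk, h0, ofAdd_zero]
    rw [← ofAdd_toAdd h, ← hk, zmodPowersHom_ofAdd_intCast]
    rcases (by decide : ∀ i : Fin 2, i = 0 ∨ i = 1) i with rfl | rfl <;>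
      rcases (by decide : ∀ i : Fin 2, i = 0 ∨ i = 1) j with rfl | rfl <;>
      simp only [ne_eq, not_true_eq_false] at hij
    · exact transl_zpow_smul_subset fun h0 =>
        hk0 ((ZMod.intCast_zmod_eq_zero_iff_dvd k 0).2 (by simp [h0]))
    · rw [Matrix.cons_val_one, Matrix.cons_val_zero, swap_zpow_of_odd]
      · exact swap_smul_subset
      · exact Int.not_even_iff_odd.1 (mt ZMod.intCast_eq_zero_iff_even.2 hk0)

end ZFreeZ2

/-- The monoid `S = ⟨a, b ∣ abab = 1, baba = 1⟩` is an LEF semigroup. -/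
theorem S_isLEF : IsLEF S :=
  isLEF_of_injective_matrix (ρ := (Units.coeHom _).comp (ZFreeZ2.toGL.comp S.toZFreeZ2))
    (Units.val_injective.comp (ZFreeZ2.toGL_injective.comp S.toZFreeZ2_injective))

end Stmt4
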